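/- Let C > 0, m ≥ 1, and let M, M̂ ∈ ℝ^{m×m} be symmetric matrices such that the smallest eigenvalue of M satisfies λ_min(M) ≥ 1/C². Let S ⊆ {1,…,m} with |S| = s and let δ ≥ 0 satisfy ‖M − M̂‖_max ≤ δ and 16 s δ ≤ 1/(2C²). Then for every α ∈ ℝ^m satisfying ‖α_{S^c}‖_1 ≤ 3 ‖α_S‖_1 one has αᵀ M̂ α ≥ ‖α‖_2² / (2C²). -/

import Mathlib

open scoped Classical
open Matrix Finset

/-- Vector ℓ1 norm. -/
noncomputable def l1 {ι : Type*} [Fintype ι] (x : ι → ℝ) : ℝ := ∑ i, |x i|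

/-- Vector ℓ2 norm. -/
noncomputable def l2 {ι : Type*} [Fintype ι] (x : ι → ℝ) : ℝ := Real.sqrt (∑ i, x i ^ 2)

/-- Entrywise maximum norm of a matrix: `max_{i,j} |A i j|`. -/
noncomputable def mmax {α β : Type*} (A : Matrix α β ℝ) : ℝ := ⨆ p : α × β, |A p.1 p.2|

/-- Restriction of a vector to an index set: agrees with `x` on `S`, zero outside. -/
def restr {ι : Type*} [DecidableEq ι] (S : Finset ι) (x : ι → ℝ) : ι → ℝ :=
  fun i => if i ∈ S then x i else 0

lemma quad_lower {m : ℕ} (M : Matrix (Fin m) (Fin m) ℝ) (hM : M.IsHermitian) (c : ℝ)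
    (h : ∀ i, c ≤ hM.eigenvalues i) (x : Fin m → ℝ) :
    c * (x ⬝ᵥ x) ≤ x ⬝ᵥ M *ᵥ x := by
  set U : Matrix (Fin m) (Fin m) ℝ := (hM.eigenvectorUnitary : Matrix (Fin m) (Fin m) ℝ) with hUdef
  have hU : U * star U = 1 := mem_unitaryGroup_iff.mp hM.eigenvectorUnitary.2
  have h1 : M - c • (1 : Matrix (Fin m) (Fin m) ℝ)
      = U * diagonal (fun i => hM.eigenvalues i - c) * star U := by
    have hspec := hM.spectral_theorem
    rw [Unitary.conjStarAlgAut_apply] at hspec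
    have hd : diagonal (fun i => hM.eigenvalues i - c)
        = diagonal (RCLike.ofReal ∘ hM.eigenvalues) - c • (1 : Matrix (Fin m) (Fin m) ℝ) := by
      ext i j
      by_cases hij : i = j <;> simp [diagonal, hij, Matrix.one_apply, Matrix.smul_apply]
    rw [hd, Matrix.mul_sub, Matrix.sub_mul, ← hspec]
    congr 1
    rw [Matrix.mul_smul, Matrix.mul_one, Matrix.smul_mul, hU]
  have hps : (M - c • (1 : Matrix (Fin m) (Fin m) ℝ)).PosSemidef := by
    rw [h1]
    exact (posSemidef_diagonal_iff.mpr fun i => sub_nonneg.mpr (h i)).mul_mul_conjTranspose_same U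
  have := hps.dotProduct_mulVec_nonneg x
  simp only [sub_mulVec, dotProduct_sub, smul_mulVec, one_mulVec, dotProduct_smul,
    star_trivial, RCLike.re_to_real, smul_eq_mul] at this
  linarith

lemma l1_restr_eq {m : ℕ} (T : Finset (Fin m)) (α : Fin m → ℝ) :
    l1 (restr T α) = ∑ i ∈ T, |α i| := by
  simp only [l1, restr]
  rw [show (fun i => |if i ∈ T then α i else 0|) = fun i => if i ∈ T then |α i| else 0 from
    funext fun i => by split <;> simp]
  rw [Finset.sum_ite_mem, Finset.univ_inter]

/-- Lemma 3 (deterministic content): the restricted eigenvalue condition with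
constant `1/C²` is preserved, with constant `1/(2C²)`, under a small entrywise
perturbation of the Gram matrix. -/
theorem stmt8 {m : ℕ} (hm : 1 ≤ m) (C : ℝ) (hC : 0 < C)
    (M Mh : Matrix (Fin m) (Fin m) ℝ) (hMsym : M.IsHermitian) (hMhsym : Mh.IsHermitian)
    (hmin : ∀ i, 1 / C ^ 2 ≤ hMsym.eigenvalues i)
    (S : Finset (Fin m)) (s : ℕ) (hs : S.card = s)
    (δ : ℝ) (hδ : 0 ≤ δ) (hpert : mmax (M - Mh) ≤ δ)
    (hsmall : 16 * s * δ ≤ 1 / (2 * C ^ 2)) :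
    ∀ α : Fin m → ℝ, l1 (restr Sᶜ α) ≤ 3 * l1 (restr S α) →
      l2 α ^ 2 / (2 * C ^ 2) ≤ α ⬝ᵥ Mh *ᵥ α := by
  intro α hα
  set A : Matrix (Fin m) (Fin m) ℝ := M - Mh with hA
  have hC2 : (0:ℝ) < C ^ 2 := by positivity
  set Ssum : ℝ := ∑ i, α i ^ 2 with hSsum
  have hSnn : 0 ≤ Ssum := Finset.sum_nonneg fun i _ => sq_nonneg _
  have hl2 : l2 α ^ 2 = Ssum := Real.sq_sqrt hSnn
  -- entrywise bound on A
  have hAij : ∀ i j, |A i j| ≤ δ := by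
    intro i j
    refine le_trans ?_ hpert
    rw [mmax]
    exact le_ciSup (Set.Finite.bddAbove
      (Set.finite_range fun p : Fin m × Fin m => |A p.1 p.2|)) ⟨i, j⟩
  -- l1 splits
  have hsplit : l1 α = l1 (restr S α) + l1 (restr Sᶜ α) := by
    rw [l1_restr_eq, l1_restr_eq, Finset.sum_add_sum_compl]
    rfl
  have hl1Snn : 0 ≤ l1 (restr S α) := by
    rw [l1_restr_eq]; exact Finset.sum_nonneg fun i _ => abs_nonneg _
  have h4 : l1 α ≤ 4 * l1 (restr S α) := by rw [hsplit]; linarith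
  have hl1nn : 0 ≤ l1 α := Finset.sum_nonneg fun i _ => abs_nonneg _
  -- Cauchy-Schwarz on S
  have hcs : (l1 (restr S α)) ^ 2 ≤ (s : ℝ) * Ssum := by
    rw [l1_restr_eq]
    calc (∑ i ∈ S, |α i|) ^ 2 ≤ (S.card : ℝ) * ∑ i ∈ S, |α i| ^ 2 :=
          sq_sum_le_card_mul_sum_sq
      _ ≤ (s : ℝ) * Ssum := by
          rw [hs]
          apply mul_le_mul_of_nonneg_left _ (Nat.cast_nonneg s)
          refine le_trans (le_of_eq ?_) (Finset.sum_le_sum_of_subset_of_nonneg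
            (Finset.subset_univ S) (fun i _ _ => sq_nonneg _))
          exact Finset.sum_congr rfl fun i _ => sq_abs _
  -- perturbation quadratic form bound
  have hquad : α ⬝ᵥ A *ᵥ α ≤ δ * (l1 α) ^ 2 := by
    have he : α ⬝ᵥ A *ᵥ α = ∑ i, ∑ j, α i * (A i j * α j) := by
      simp [dotProduct, mulVec, Finset.mul_sum]
    rw [he]
    calc ∑ i, ∑ j, α i * (A i j * α j) ≤ ∑ i, ∑ j, |α i| * (δ * |α j|) := by
          refine Finset.sum_le_sum fun i _ => Finset.sum_le_sum fun j _ => ?_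
          calc α i * (A i j * α j) ≤ |α i * (A i j * α j)| := le_abs_self _
            _ = |α i| * (|A i j| * |α j|) := by rw [abs_mul, abs_mul]
            _ ≤ |α i| * (δ * |α j|) :=
                mul_le_mul_of_nonneg_left
                  (mul_le_mul_of_nonneg_right (hAij i j) (abs_nonneg _)) (abs_nonneg _)
      _ = δ * ∑ i, ∑ j, |α i| * |α j| := by
          rw [Finset.mul_sum]
          refine Finset.sum_congr rfl fun i _ => ?_
          rw [Finset.mul_sum]
          exact Finset.sum_congr rfl fun j _ => by ring
      _ = δ * (l1 α) ^ 2 := by rw [l1, sq, Finset.sum_mul_sum]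
  -- lower bound from eigenvalues
  have hdot : α ⬝ᵥ α = Ssum := by simp [dotProduct, hSsum, sq]
  have hlow : 1 / C ^ 2 * Ssum ≤ α ⬝ᵥ M *ᵥ α := by
    rw [← hdot]; exact quad_lower M hMsym _ hmin α
  -- combine
  have hMMh : α ⬝ᵥ Mh *ᵥ α = α ⬝ᵥ M *ᵥ α - α ⬝ᵥ A *ᵥ α := by
    simp [hA, sub_mulVec, dotProduct_sub]
  have h16 : (l1 α) ^ 2 ≤ 16 * ((s : ℝ) * Ssum) := by nlinarith
  have hδ16 : δ * (l1 α) ^ 2 ≤ 16 * (s : ℝ) * δ * Ssum := by nlinarith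
  have hfin : δ * (l1 α) ^ 2 ≤ 1 / (2 * C ^ 2) * Ssum :=
    le_trans hδ16 (mul_le_mul_of_nonneg_right hsmall hSnn)
  have heq : Ssum / (2 * C ^ 2) = 1 / C ^ 2 * Ssum - 1 / (2 * C ^ 2) * Ssum := by
    field_simp; ring
  rw [hl2, hMMh]
  linarith
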